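/- arXiv:math/0411570 — 3 statements merged into one kernel-verified Lean document; each statement's English description precedes it below -/
import Mathlib

section
/- Let Δ be a simplicial complex on [n] with facets all of cardinality d = n - l, and suppose any two distinct minimal missing faces F, G of Δ satisfy |F ∪ G| ≥ n + 2 - l. Then for every subset R ⊆ [n] of cardinality l - 1, the restricted complex Δ_{-R} on [n]\R has exactly one minimal missing face. -/
open Finset

/-- Let `Δ` be a simplicial complex on `[n]` with all facets of cardinality `d = n - l`,
such that any two distinct minimal missing faces `F, G` satisfy `|F ∪ G| ≥ n + 2 - l`.
Then for every `R ⊆ [n]` of cardinality `l - 1`, the restriction `Δ_{-R}` has exactly one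
minimal missing face. -/
theorem stmt_4 (n l : ℕ) (hl : 1 ≤ l) (hln : l ≤ n)
    (Δ : Finset (Finset (Fin n)))
    (hΔ : ∀ F ∈ Δ, ∀ G ⊆ F, G ∈ Δ)
    (hfac : ∀ F ∈ Δ, (∀ G ∈ Δ, F ⊆ G → F = G) → F.card = n - l)
    (hmm : ∀ F G : Finset (Fin n),
      (F ∉ Δ ∧ ∀ F' ⊂ F, F' ∈ Δ) → (G ∉ Δ ∧ ∀ G' ⊂ G, G' ∈ Δ) → F ≠ G →
      n + 2 - l ≤ (F ∪ G).card)
    (R : Finset (Fin n)) (hR : R.card = l - 1) :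
    ∃! F : Finset (Fin n), F ⊆ Rᶜ ∧ F ∉ Δ ∧ ∀ G ⊂ F, G ∈ Δ := by
  have hRc : Rᶜ.card = n - l + 1 := by
    rw [Finset.card_compl, hR, Fintype.card_fin]; omega
  have hRcΔ : Rᶜ ∉ Δ := by
    intro h
    obtain ⟨G, hG, hGmax⟩ := Finset.exists_max_image (Δ.filter (fun H => Rᶜ ⊆ H))
      Finset.card ⟨Rᶜ, by simp [h]⟩
    simp only [Finset.mem_filter] at hG
    have hmax : ∀ G' ∈ Δ, G ⊆ G' → G = G' := by
      intro G' hG' hsub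
      exact Finset.eq_of_subset_of_card_le hsub
        (hGmax G' (Finset.mem_filter.2 ⟨hG', hG.2.trans hsub⟩))
    have hcard := hfac G hG.1 hmax
    have hle := Finset.card_le_card hG.2
    omega
  obtain ⟨F, hF, hFmin⟩ := Finset.exists_min_image (Rᶜ.powerset.filter (· ∉ Δ))
    Finset.card ⟨Rᶜ, by simp [hRcΔ]⟩
  simp only [Finset.mem_filter, Finset.mem_powerset] at hF
  have hFmm : ∀ G ⊂ F, G ∈ Δ := by
    intro G hG
    by_contra hGΔ
    have h1 := hFmin G (Finset.mem_filter.2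
      ⟨Finset.mem_powerset.2 (hG.subset.trans hF.1), hGΔ⟩)
    have h2 := Finset.card_lt_card hG
    omega
  refine ⟨F, ⟨hF.1, hF.2, hFmm⟩, ?_⟩
  rintro G ⟨hG1, hG2, hG3⟩
  by_contra hne
  have h1 := hmm G F ⟨hG2, hG3⟩ ⟨hF.2, hFmm⟩ hne
  have h2 : (G ∪ F).card ≤ Rᶜ.card :=
    Finset.card_le_card (Finset.union_subset hG1 hF.1)
  omega
end

section
/- Let l ≥ 3 and let Δ* be a simplicial complex on [n] such that: every (l-1)-subset of [n] is a face; any two distinct facets intersect in at most l - 2 elements; every face of cardinality l - 1 extends to a face of cardinality l; and every facet has cardinality at most d*. Fix a facet X with |X| = d* and let Y = [n]\X. Then for every subset A ⊆ X with |A| = l - 2 and every y ∈ Y, there exists z ∈ Y with z ≠ y such that A ∪ {y, z} is a face of Δ*. -/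
open Finset

/-- Let `l ≥ 3` and let `Δ*` be a simplicial complex on `[n]` in which every `(l-1)`-subset
is a face, any two distinct facets meet in at most `l - 2` elements, every face of
cardinality `l - 1` extends to a face of cardinality `l`, and every facet has cardinality
at most `d*`. Fix a facet `X` with `|X| = d*` and let `Y = [n] \ X`. Then for every
`A ⊆ X` with `|A| = l - 2` and every `y ∈ Y` there is `z ∈ Y`, `z ≠ y`, with
`A ∪ {y, z}` a face of `Δ*`. -/
theorem stmt_7 (n l dstar : ℕ) (hl : 3 ≤ l)
    (Δ : Finset (Finset (Fin n)))
    (hΔ : ∀ F ∈ Δ, ∀ G ⊆ F, G ∈ Δ)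
    (hall : ∀ S : Finset (Fin n), S.card = l - 1 → S ∈ Δ)
    (hint : ∀ F ∈ Δ, ∀ G ∈ Δ, (∀ H ∈ Δ, F ⊆ H → F = H) →
      (∀ H ∈ Δ, G ⊆ H → G = H) → F ≠ G → (F ∩ G).card ≤ l - 2)
    (hext : ∀ S ∈ Δ, S.card = l - 1 → ∃ T ∈ Δ, S ⊆ T ∧ T.card = l)
    (hbd : ∀ F ∈ Δ, (∀ H ∈ Δ, F ⊆ H → F = H) → F.card ≤ dstar)
    (X : Finset (Fin n)) (hX : X ∈ Δ) (hXmax : ∀ H ∈ Δ, X ⊆ H → X = H)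
    (hXcard : X.card = dstar)
    (A : Finset (Fin n)) (hA : A ⊆ X) (hAcard : A.card = l - 2)
    (y : Fin n) (hy : y ∈ Xᶜ) :
    ∃ z ∈ Xᶜ, z ≠ y ∧ insert y (insert z A) ∈ Δ := by
  have hyX : y ∉ X := by simpa using hy
  have hyA : y ∉ A := fun h => hyX (hA h)
  have hcard : (insert y A).card = l - 1 := by
    rw [card_insert_of_notMem hyA, hAcard]; omega
  obtain ⟨T, hT, hsub, hTcard⟩ := hext _ (hall _ hcard) hcard
  -- find z ∈ T \ insert y A
  have hdiff : (T \ insert y A).card = 1 := by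
    rw [card_sdiff_of_subset hsub, hTcard, hcard]; omega
  obtain ⟨z, hz⟩ := card_eq_one.mp hdiff
  have hzT : z ∈ T \ insert y A := by rw [hz]; exact mem_singleton_self z
  have hzT' : z ∈ T := (mem_sdiff.mp hzT).1
  have hzni : z ∉ insert y A := (mem_sdiff.mp hzT).2
  have hzy : z ≠ y := fun h => hzni (by rw [h]; exact mem_insert_self _ _)
  have hzA : z ∉ A := fun h => hzni (mem_insert_of_mem h)
  -- find a facet F containing T
  have hne : (Δ.filter (fun F => T ⊆ F)).Nonempty := ⟨T, mem_filter.mpr ⟨hT, Subset.rfl⟩⟩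
  obtain ⟨F, hF, hFmax⟩ := Finset.exists_max_image _ Finset.card hne
  have hFΔ : F ∈ Δ := (mem_filter.mp hF).1
  have hTF : T ⊆ F := (mem_filter.mp hF).2
  have hFfacet : ∀ H ∈ Δ, F ⊆ H → F = H := by
    intro H hH hFH
    exact eq_of_subset_of_card_le hFH
      (hFmax H (mem_filter.mpr ⟨hH, hTF.trans hFH⟩))
  have hyF : y ∈ F := hTF (hsub (mem_insert_self _ _))
  have hFX : F ≠ X := fun h => hyX (h ▸ hyF)
  -- z ∉ X
  have hzX : z ∉ X := by
    intro hzX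
    have hsubFX : insert z A ⊆ F ∩ X := by
      intro w hw
      rcases mem_insert.mp hw with h | h
      · subst h; exact mem_inter.mpr ⟨hTF hzT', hzX⟩
      · exact mem_inter.mpr ⟨hTF (hsub (mem_insert_of_mem h)), hA h⟩
    have h1 : (insert z A).card = l - 1 := by
      rw [card_insert_of_notMem hzA, hAcard]; omega
    have h2 := (hint F hFΔ X hX hFfacet hXmax hFX)
    have := card_le_card hsubFX
    omega
  refine ⟨z, by simpa using hzX, hzy, ?_⟩
  refine hΔ T hT _ ?_
  intro w hw
  rcases mem_insert.mp hw with h | h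
  · subst h; exact hsub (mem_insert_self _ _)
  rcases mem_insert.mp h with h | h
  · subst h; exact hzT'
  · exact hsub (mem_insert_of_mem h)
end

section
/- Let b be a multidegree in ℕ^n with support R ⊆ [n], and let Δ be a simplicial complex on [n]. Then the degree-b component of the i-th homology of the complex L(Δ) of free S = k[x_1,...,x_n]-modules (the cellular complex of Δ with variable x_j attached to vertex j) is isomorphic as a k-vector space to the reduced simplicial homology H̃_{i}(Δ_R; k). -/
open Finset MvPolynomial

noncomputable section

/-- Characteristic vector of a subset of `[n]`. -/
def chi (n : ℕ) (F : Finset (Fin n)) : Fin n →₀ ℕ := ∑ x ∈ F, Finsupp.single x 1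

/-- Incidence sign: `(-1)^{#{y ∈ G : y < x}}`. -/
def sgn (n : ℕ) (G : Finset (Fin n)) (x : Fin n) : ℤ :=
  (-1) ^ (G.filter (fun y => y < x)).card

/-- Simplicial boundary operator with coefficients in `k`. -/
def bdk (n : ℕ) (k : Type) [Field k] (c : Finset (Fin n) → k) : Finset (Fin n) → k :=
  fun G => ∑ x ∈ Gᶜ, (sgn n G x) • c (insert x G)

/-- Boundary operator of the cellular complex `L(Δ)` over `S = k[x_1,…,x_n]`: the variable
`x_l` attached to the removed vertex multiplies the coefficient. -/
def bdS (n : ℕ) (k : Type) [Field k] (c : Finset (Fin n) → MvPolynomial (Fin n) k) :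
    Finset (Fin n) → MvPolynomial (Fin n) k :=
  fun G => ∑ x ∈ Gᶜ, (sgn n G x) • (X x * c (insert x G))

theorem bdk_add (n : ℕ) (k : Type) [Field k] (a b : Finset (Fin n) → k)
    (G : Finset (Fin n)) : bdk n k (a + b) G = bdk n k a G + bdk n k b G := by
  simp [bdk, smul_add, Finset.sum_add_distrib]

theorem bdk_smul (n : ℕ) (k : Type) [Field k] (r : k) (a : Finset (Fin n) → k)
    (G : Finset (Fin n)) : bdk n k (r • a) G = r • bdk n k a G := by
  simp only [bdk, Finset.mul_sum, smul_eq_mul, Pi.smul_apply, zsmul_eq_mul]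
  congr 1; funext x; ring

theorem bdk_zero (n : ℕ) (k : Type) [Field k] (G : Finset (Fin n)) :
    bdk n k (0 : Finset (Fin n) → k) G = 0 := by simp [bdk]

theorem bdS_add (n : ℕ) (k : Type) [Field k] (a b : Finset (Fin n) → MvPolynomial (Fin n) k)
    (G : Finset (Fin n)) : bdS n k (a + b) G = bdS n k a G + bdS n k b G := by
  simp [bdS, mul_add, smul_add, Finset.sum_add_distrib]

theorem bdS_smul (n : ℕ) (k : Type) [Field k] (r : k)
    (a : Finset (Fin n) → MvPolynomial (Fin n) k) (G : Finset (Fin n)) :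
    bdS n k (r • a) G = r • bdS n k a G := by
  simp only [bdS, Finset.smul_sum, Pi.smul_apply, zsmul_eq_mul]
  congr 1; funext x
  rw [Algebra.mul_smul_comm, Algebra.smul_def, Algebra.smul_def]
  ring

theorem bdS_zero (n : ℕ) (k : Type) [Field k] (G : Finset (Fin n)) :
    bdS n k (0 : Finset (Fin n) → MvPolynomial (Fin n) k) G = 0 := by simp [bdS]

/-- Cycles of the chain complex of the restriction `Δ_R` with coefficients in `k`,
in the chains indexed by faces of cardinality `p`. -/
def Zk (n : ℕ) (k : Type) [Field k] (Δ : Finset (Finset (Fin n))) (R : Finset (Fin n))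
    (p : ℕ) : Submodule k (Finset (Fin n) → k) where
  carrier := {c | (∀ F, c F ≠ 0 → F ∈ Δ ∧ F.card = p ∧ F ⊆ R) ∧
    ∀ G, bdk n k c G = 0}
  add_mem' := by
    rintro a b ⟨hsa, hca⟩ ⟨hsb, hcb⟩
    refine ⟨fun F h => ?_, fun G => by rw [bdk_add, hca G, hcb G, add_zero]⟩
    by_cases h1 : a F = 0
    · exact hsb F (by simpa [h1] using h)
    · exact hsa F h1
  zero_mem' := ⟨fun F h => absurd rfl h, fun G => bdk_zero n k G⟩
  smul_mem' := by
    rintro r a ⟨hsa, hca⟩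
    refine ⟨fun F h => hsa F fun h0 => h (by simp [h0]),
      fun G => by rw [bdk_smul, hca G, smul_zero]⟩

/-- Boundaries of the chain complex of `Δ_R` with coefficients in `k`. -/
def Bk (n : ℕ) (k : Type) [Field k] (Δ : Finset (Finset (Fin n))) (R : Finset (Fin n))
    (p : ℕ) : Submodule k (Finset (Fin n) → k) where
  carrier := {c | ∃ e : Finset (Fin n) → k,
    (∀ F, e F ≠ 0 → F ∈ Δ ∧ F.card = p + 1 ∧ F ⊆ R) ∧ ∀ G, bdk n k e G = c G}
  add_mem' := by
    rintro a b ⟨e1, hs1, he1⟩ ⟨e2, hs2, he2⟩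
    refine ⟨e1 + e2, fun F h => ?_, fun G => by rw [bdk_add, he1 G, he2 G]; rfl⟩
    by_cases h1 : e1 F = 0
    · exact hs2 F (by simpa [h1] using h)
    · exact hs1 F h1
  zero_mem' := ⟨0, fun F h => absurd rfl h, fun G => bdk_zero n k G⟩
  smul_mem' := by
    rintro r a ⟨e, hs, he⟩
    exact ⟨r • e, fun F h => hs F fun h0 => h (by simp [h0]),
      fun G => by rw [bdk_smul, he G]; rfl⟩

/-- The multidegree-`b` part of the cycles of `L(Δ)` in the chains indexed by faces of
cardinality `p`: each coefficient is a scalar multiple of the monomial `x^{b - χ_F}`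
(and vanishes unless `χ_F ≤ b`), and the `S`-boundary vanishes. -/
def ZS (n : ℕ) (k : Type) [Field k] (Δ : Finset (Finset (Fin n))) (b : Fin n →₀ ℕ)
    (p : ℕ) : Submodule k (Finset (Fin n) → MvPolynomial (Fin n) k) where
  carrier := {c |
    (∀ F, c F ≠ 0 → F ∈ Δ ∧ F.card = p ∧ chi n F ≤ b) ∧
    (∀ F, ∃ a : k, c F = monomial (b - chi n F) a) ∧
    ∀ G, bdS n k c G = 0}
  add_mem' := by
    rintro a b' ⟨hsa, hha, hca⟩ ⟨hsb, hhb, hcb⟩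
    refine ⟨fun F h => ?_, fun F => ?_, fun G => by rw [bdS_add, hca G, hcb G, add_zero]⟩
    · by_cases h1 : a F = 0
      · exact hsb F (by simpa [h1] using h)
      · exact hsa F h1
    · obtain ⟨a1, h1⟩ := hha F
      obtain ⟨a2, h2⟩ := hhb F
      exact ⟨a1 + a2, by simp [Pi.add_apply, h1, h2]⟩
  zero_mem' := ⟨fun F h => absurd rfl h, fun F => ⟨0, by simp⟩, fun G => bdS_zero n k G⟩
  smul_mem' := by
    rintro r a ⟨hsa, hha, hca⟩
    refine ⟨fun F h => hsa F fun h0 => h (by simp [h0]), fun F => ?_,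
      fun G => by rw [bdS_smul, hca G, smul_zero]⟩
    obtain ⟨a1, h1⟩ := hha F
    exact ⟨r * a1, by simp [Pi.smul_apply, h1, MvPolynomial.smul_monomial]⟩

/-- The multidegree-`b` part of the boundaries of `L(Δ)` in the chains indexed by faces of
cardinality `p`. -/
def BS (n : ℕ) (k : Type) [Field k] (Δ : Finset (Finset (Fin n))) (b : Fin n →₀ ℕ)
    (p : ℕ) : Submodule k (Finset (Fin n) → MvPolynomial (Fin n) k) where
  carrier := {c | ∃ e : Finset (Fin n) → MvPolynomial (Fin n) k,
    (∀ F, e F ≠ 0 → F ∈ Δ ∧ F.card = p + 1 ∧ chi n F ≤ b) ∧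
    (∀ F, ∃ a : k, e F = monomial (b - chi n F) a) ∧
    ∀ G, bdS n k e G = c G}
  add_mem' := by
    rintro a b' ⟨e1, hs1, hh1, he1⟩ ⟨e2, hs2, hh2, he2⟩
    refine ⟨e1 + e2, fun F h => ?_, fun F => ?_, fun G => by rw [bdS_add, he1 G, he2 G]; rfl⟩
    · by_cases h1 : e1 F = 0
      · exact hs2 F (by simpa [h1] using h)
      · exact hs1 F h1
    · obtain ⟨a1, h1⟩ := hh1 F
      obtain ⟨a2, h2⟩ := hh2 F
      exact ⟨a1 + a2, by simp [Pi.add_apply, h1, h2]⟩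
  zero_mem' := ⟨0, fun F h => absurd rfl h, fun F => ⟨0, by simp⟩, fun G => bdS_zero n k G⟩
  smul_mem' := by
    rintro r a ⟨e, hs, hh, he⟩
    refine ⟨r • e, fun F h => hs F fun h0 => h (by simp [h0]), fun F => ?_,
      fun G => by rw [bdS_smul, he G]; rfl⟩
    obtain ⟨a1, h1⟩ := hh F
    exact ⟨r * a1, by simp [Pi.smul_apply, h1, MvPolynomial.smul_monomial]⟩

/-!
In multidegree `b`, the face `F` of `L(Δ)` can only carry a coefficient `λ • x^(b - χ_F)`, and this
is nonzero only when `F ⊆ supp b`. Since `x_l * x^(b - χ_(F ∪ {l})) = x^(b - χ_F)` for such faces,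
`λ ↦ λ • x^(b - χ_F)` is an injective chain map from the simplicial chains of `Δ_(supp b)` onto the
degree-`b` strand of `L(Δ)`. It therefore carries cycles onto cycles and boundaries onto boundaries,
and the subquotients agree.
-/

namespace Submodule

variable {R M N : Type*} [Ring R] [AddCommGroup M] [Module R M] [AddCommGroup N] [Module R N]

def subquotientEquivMapOfInjective (f : M →ₗ[R] N) (hf : Function.Injective f)
    (Z B : Submodule R M) :
    (Z ⧸ B.comap Z.subtype) ≃ₗ[R] (Z.map f ⧸ (B.map f).comap (Z.map f).subtype) :=
  Quotient.equiv _ _ (equivMapOfInjective f hf Z) <| by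
    ext ⟨y, hy⟩
    simp only [mem_map, mem_comap, subtype_apply]
    constructor
    · rintro ⟨x, hxB, hxy⟩
      exact ⟨x, hxB, congrArg Subtype.val hxy⟩
    · rintro ⟨x, hxB, hxy⟩
      obtain ⟨z, hz, rfl⟩ := hy
      exact ⟨⟨x, hf hxy ▸ hz⟩, hxB, Subtype.ext hxy⟩

end Submodule

section

variable {n : ℕ} {k : Type} [Field k] (b : Fin n →₀ ℕ)

lemma chi_apply (F : Finset (Fin n)) (x : Fin n) : chi n F x = if x ∈ F then 1 else 0 := by
  simp [chi, Finsupp.finsetSum_apply, Finsupp.single_apply]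

lemma chi_le_iff {F : Finset (Fin n)} : chi n F ≤ b ↔ F ⊆ b.support := by
  simp only [Finsupp.le_def, chi_apply, Finset.subset_iff, Finsupp.mem_support_iff]
  refine forall_congr' fun x => ?_
  split_ifs <;> simp [*, Nat.one_le_iff_ne_zero]

lemma chi_insert {G : Finset (Fin n)} {x : Fin n} (hx : x ∉ G) :
    chi n (insert x G) = chi n G + Finsupp.single x 1 := by
  rw [chi, Finset.sum_insert hx, add_comm]
  rfl

lemma single_add_sub_chi_insert {G : Finset (Fin n)} {x : Fin n} (hx : x ∉ G)
    (h : chi n (insert x G) ≤ b) :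
    Finsupp.single x 1 + (b - chi n (insert x G)) = b - chi n G := by
  rw [chi_insert hx] at h ⊢
  rw [tsub_add_eq_tsub_tsub, add_comm, tsub_add_cancel_of_le (le_tsub_of_add_le_left h)]

def monomialLift : (Finset (Fin n) → k) →ₗ[k] (Finset (Fin n) → MvPolynomial (Fin n) k) :=
  LinearMap.pi fun F => (monomial (b - chi n F)).comp (LinearMap.proj F)

@[simp]
lemma monomialLift_apply (a : Finset (Fin n) → k) (F : Finset (Fin n)) :
    monomialLift b a F = monomial (b - chi n F) (a F) :=
  rfl

lemma monomialLift_injective : Function.Injective (monomialLift (k := k) b) :=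
  fun _ _ h => funext fun F => by simpa using congrArg (coeff (b - chi n F)) (congrFun h F)

lemma exists_eq_monomialLift {c : Finset (Fin n) → MvPolynomial (Fin n) k}
    (hc : ∀ F, ∃ a : k, c F = monomial (b - chi n F) a) : ∃ a, c = monomialLift b a := by
  choose a ha using hc
  exact ⟨a, funext ha⟩

lemma monomialLift_support_iff {Δ : Finset (Finset (Fin n))} {p : ℕ} {a : Finset (Fin n) → k} :
    (∀ F, monomialLift b a F ≠ 0 → F ∈ Δ ∧ F.card = p ∧ chi n F ≤ b) ↔
      ∀ F, a F ≠ 0 → F ∈ Δ ∧ F.card = p ∧ F ⊆ b.support := by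
  simp only [monomialLift_apply, ne_eq, monomial_eq_zero, chi_le_iff]

lemma bdS_monomialLift {a : Finset (Fin n) → k} (ha : ∀ F, a F ≠ 0 → F ⊆ b.support) :
    bdS n k (monomialLift b a) = monomialLift b (bdk n k a) := by
  funext G
  simp only [bdS, bdk, monomialLift_apply, map_sum]
  refine Finset.sum_congr rfl fun x hx => ?_
  by_cases h0 : a (insert x G) = 0
  · simp [h0]
  rw [X, monomial_mul, one_mul, single_add_sub_chi_insert b (by simpa using hx)
    ((chi_le_iff b).mpr (ha _ h0)), smul_monomial]

lemma ZS_eq_map (Δ : Finset (Finset (Fin n))) (p : ℕ) :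
    ZS n k Δ b p = (Zk n k Δ b.support p).map (monomialLift b) := by
  ext c
  constructor
  · rintro ⟨hs, hc, hz⟩
    obtain ⟨a, rfl⟩ := exists_eq_monomialLift b hc
    have ha := (monomialLift_support_iff b).mp hs
    refine ⟨a, ⟨ha, fun G => ?_⟩, rfl⟩
    simpa [bdS_monomialLift b fun F h => (ha F h).2.2] using hz G
  · rintro ⟨a, ⟨ha, hz⟩, rfl⟩
    refine ⟨(monomialLift_support_iff b).mpr ha, fun F => ⟨a F, rfl⟩, fun G => ?_⟩
    simp [bdS_monomialLift b fun F h => (ha F h).2.2, hz G]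

lemma BS_eq_map (Δ : Finset (Finset (Fin n))) (p : ℕ) :
    BS n k Δ b p = (Bk n k Δ b.support p).map (monomialLift b) := by
  ext c
  constructor
  · rintro ⟨e, hs, he, hc⟩
    obtain ⟨a, rfl⟩ := exists_eq_monomialLift b he
    have ha := (monomialLift_support_iff b).mp hs
    refine ⟨bdk n k a, ⟨a, ha, fun G => rfl⟩, ?_⟩
    rw [← bdS_monomialLift b fun F h => (ha F h).2.2, ← funext hc]
  · rintro ⟨_, ⟨a, ha, hc⟩, rfl⟩
    refine ⟨monomialLift b a, (monomialLift_support_iff b).mpr ha, fun F => ⟨a F, rfl⟩, ?_⟩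
    rw [bdS_monomialLift b fun F h => (ha F h).2.2, funext hc]
    exact fun G => rfl

end

theorem stmt_10_general (n : ℕ) (k : Type) [Field k] (Δ : Finset (Finset (Fin n)))
    (b : Fin n →₀ ℕ) (i : ℕ) :
    Nonempty (
      ((ZS n k Δ b (i + 1)) ⧸ ((BS n k Δ b (i + 1)).comap (ZS n k Δ b (i + 1)).subtype))
        ≃ₗ[k]
      ((Zk n k Δ b.support (i + 1)) ⧸
        ((Bk n k Δ b.support (i + 1)).comap (Zk n k Δ b.support (i + 1)).subtype))) := by
  rw [ZS_eq_map, BS_eq_map]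
  exact ⟨(Submodule.subquotientEquivMapOfInjective _ (monomialLift_injective b) _ _).symm⟩

/-- For a multidegree `b ∈ ℕ^n` with support `R`, the degree-`b` component of the `i`-th
homology of the cellular complex `L(Δ)` over `S = k[x_1,…,x_n]` is isomorphic, as a
`k`-vector space, to the reduced simplicial homology `H̃_i(Δ_R; k)` (chains in homological
degree `i` are indexed by faces of cardinality `i + 1`). -/
theorem stmt_10 (n : ℕ) (k : Type) [Field k] (Δ : Finset (Finset (Fin n)))
    (hΔ : ∀ F ∈ Δ, ∀ G ⊆ F, G ∈ Δ)
    (b : Fin n →₀ ℕ) (i : ℕ) :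
    Nonempty (
      ((ZS n k Δ b (i + 1)) ⧸ ((BS n k Δ b (i + 1)).comap (ZS n k Δ b (i + 1)).subtype))
        ≃ₗ[k]
      ((Zk n k Δ b.support (i + 1)) ⧸
        ((Bk n k Δ b.support (i + 1)).comap (Zk n k Δ b.support (i + 1)).subtype))) :=
  stmt_10_general n k Δ b i
end
end
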